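/- Let ℓ ≥ 0, m ≥ 2 and n ≥ 0 be integers. Consider the four weight types A = (1,0), B = (0,1), C = (−1,0), D = (−1,−1) in ℤ² with multiplicities μ(A) = ℓ+m+n+2, μ(B) = m, μ(C) = ℓ+n+2, μ(D) = m. For a subset T of {A,B,C,D}, say that (c₁,c₂) ∈ ℤ² admits a T-representation if there exist integers a, b, e, f such that (c₁,c₂) = a·(1,0) + b·(0,1) + e·(−1,0) + f·(−1,−1), where the coefficient of each weight type in T is ≥ 0 and the coefficient of each weight type not in T is ≤ −μ(that type). Then (c₁,c₂) admits a T-representation for at least one T among {D}, {A,D}, {A}, {A,B}, {B}, {B,C,D} if and only if it is NOT the case that |c₂| ≤ m−1 and −(ℓ+m+n+1) + min(c₂,0) ≤ c₁ ≤ (ℓ+m+n+1) + max(c₂,0). -/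
import Mathlib


/-- `(c₁,c₂)` admits a `T`-representation in the weight types
A = (1,0), B = (0,1), C = (−1,0), D = (−1,−1) (indexed by 0,1,2,3) with
multiplicities ℓ+m+n+2, m, ℓ+n+2, m. -/
def TRep14 (l m n : ℕ) (T : Finset (Fin 4)) (c₁ c₂ : ℤ) : Prop :=
  ∃ a b e f : ℤ,
    (c₁, c₂) = a • ((1 : ℤ), (0 : ℤ)) + b • ((0 : ℤ), (1 : ℤ)) +
      e • ((-1 : ℤ), (0 : ℤ)) + f • ((-1 : ℤ), (-1 : ℤ)) ∧
    (if (0 : Fin 4) ∈ T then 0 ≤ a else a ≤ -((l : ℤ) + m + n + 2)) ∧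
    (if (1 : Fin 4) ∈ T then 0 ≤ b else b ≤ -(m : ℤ)) ∧
    (if (2 : Fin 4) ∈ T then 0 ≤ e else e ≤ -((l : ℤ) + n + 2)) ∧
    (if (3 : Fin 4) ∈ T then 0 ≤ f else f ≤ -(m : ℤ))

/-- Type (III) non-MCM region: `(c₁,c₂)` admits a `T`-representation for one of
the subsets {D}, {A,D}, {A}, {A,B}, {B}, {B,C,D} iff `(c₁,c₂)` lies outside the
MCM region of Figure 9. -/
theorem stmt_14 (l m n : ℕ) (hm : 2 ≤ m) (c₁ c₂ : ℤ) :
    (TRep14 l m n {3} c₁ c₂ ∨ TRep14 l m n {0, 3} c₁ c₂ ∨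
      TRep14 l m n {0} c₁ c₂ ∨ TRep14 l m n {0, 1} c₁ c₂ ∨
      TRep14 l m n {1} c₁ c₂ ∨ TRep14 l m n {1, 2, 3} c₁ c₂) ↔
    ¬(|c₂| ≤ (m : ℤ) - 1 ∧ -((l : ℤ) + m + n + 1) + min c₂ 0 ≤ c₁ ∧
      c₁ ≤ ((l : ℤ) + m + n + 1) + max c₂ 0) := by
  rw [abs_le]
  constructor
  · rintro (h|h|h|h|h|h) <;>
    · obtain ⟨a,b,e,f,heq,h0,h1,h2,h3⟩ := h
      simp [Prod.ext_iff] at heq h0 h1 h2 h3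
      omega
  · intro h
    by_cases hc1 : c₂ ≤ -(m : ℤ)
    · refine Or.inl ⟨c₁ + min (-((l:ℤ)+n+2)) (-((l:ℤ)+m+n+2) - c₁ - (-(m:ℤ) - c₂)) + (-(m:ℤ) - c₂),
        -(m:ℤ), min (-((l:ℤ)+n+2)) (-((l:ℤ)+m+n+2) - c₁ - (-(m:ℤ) - c₂)), -(m:ℤ) - c₂, ?_, ?_, ?_, ?_, ?_⟩ <;>
        simp [Prod.ext_iff] <;> omega
    by_cases hc2 : (m : ℤ) ≤ c₂
    · refine Or.inr (Or.inr (Or.inr (Or.inr (Or.inl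
        ⟨c₁ + min (-((l:ℤ)+n+2)) (-((l:ℤ)+m+n+2) - c₁ + m) + (-(m:ℤ)),
         c₂ - m, min (-((l:ℤ)+n+2)) (-((l:ℤ)+m+n+2) - c₁ + m), -(m:ℤ), ?_, ?_, ?_, ?_, ?_⟩)))) <;>
        simp [Prod.ext_iff] <;> omega
    by_cases hc3 : ((l:ℤ)+m+n+2) + max c₂ 0 ≤ c₁
    · refine Or.inr (Or.inr (Or.inl
        ⟨c₁ + (-((l:ℤ)+n+2)) + (-(m:ℤ) - max c₂ 0), c₂ + (-(m:ℤ) - max c₂ 0),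
         -((l:ℤ)+n+2), -(m:ℤ) - max c₂ 0, ?_, ?_, ?_, ?_, ?_⟩)) <;>
        simp [Prod.ext_iff] <;> omega
    have hc4 : c₁ ≤ -((l:ℤ)+m+n+2) + min c₂ 0 := by omega
    refine Or.inr (Or.inr (Or.inr (Or.inr (Or.inr
      ⟨c₁ + max 0 (-c₂), c₂ + max 0 (-c₂), 0, max 0 (-c₂), ?_, ?_, ?_, ?_, ?_⟩)))) <;>
      simp [Prod.ext_iff] <;> omega
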